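/- (Affine invariance) Let x_i' = A·x_i with A invertible (a pure linear map, b = 0). Let w = Σ̄⁻¹μ̄ be the MILDA vector computed from the original data (Σ̄ invertible, μ̄ the global mean) and w' = (Σ̄')⁻¹μ̄' the MILDA vector computed from the transformed data. Then w' = A^{-T}·w, so the projections wᵀx_i and (w')ᵀx_i' coincide for all i. -/
import Mathlib


open Matrix

theorem milda_affine_invariance {D : ℕ}
    (A Sbar : Matrix (Fin D) (Fin D) ℝ)
    (hA : IsUnit A.det) (hS : IsUnit Sbar.det)
    (μbar : Fin D → ℝ)
    (w w' : Fin D → ℝ)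
    (hw : w = Sbar⁻¹.mulVec μbar)
    (hw' : w' = (A * Sbar * Aᵀ)⁻¹.mulVec (A.mulVec μbar)) :
    w' = (Aᵀ)⁻¹.mulVec w ∧ ∀ x : Fin D → ℝ, w' ⬝ᵥ A.mulVec x = w ⬝ᵥ x := by
  have hAT : IsUnit Aᵀ.det := by rwa [Matrix.det_transpose]
  have h2 : A⁻¹ *ᵥ (A *ᵥ μbar) = μbar := by
    rw [Matrix.mulVec_mulVec, Matrix.nonsing_inv_mul _ hA, Matrix.one_mulVec]
  have h1 : w' = (Aᵀ)⁻¹.mulVec w := by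
    rw [hw', hw, Matrix.mul_inv_rev, Matrix.mul_inv_rev, ← Matrix.mulVec_mulVec,
      ← Matrix.mulVec_mulVec, h2]
  refine ⟨h1, fun x => ?_⟩
  rw [h1, ← Matrix.transpose_nonsing_inv, ← Matrix.vecMul_transpose, Matrix.transpose_transpose,
    Matrix.dotProduct_mulVec, Matrix.vecMul_vecMul, Matrix.nonsing_inv_mul _ hA,
    Matrix.vecMul_one]
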